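/- Theorem 2(v) core computation: with A Hurwitz and the dual setup A_r = −P_S S_r* P_S^{-1}, C_r = −B̄* P_S^{-1}, Q̂_T = P_S^{-1}, suppose W ∈ ℂ^{n×r} satisfies W* A = S_r W* + B̄ C − e^{−S_r t} B̄ C e^{At} (the time-limited output Sylvester equation). Then Y := Q̂_T W* satisfies A_r* Y + Y A + C_r* C − e^{A_r* t} C_r* C e^{At} = 0; by uniqueness, the cross observability Gramian Q̃_T equals P_S^{-1} W*. -/

import Mathlib

/-!
Taking conjugate transposes in the Lyapunov equation for `P_S` gives a second solution `P_Sᴴ` of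
the same Sylvester equation `S_r X + X S_rᴴ = R`; since no eigenvalue of `S_r` is minus an
eigenvalue of `S_rᴴ`, that equation has a unique solution and `P_S` is Hermitian. Then
`A_rᴴ = -P_S⁻¹ S_r P_S`, `C_rᴴ = -P_S⁻¹ B̄` and `e^{t A_rᴴ} = P_S⁻¹ e^{-t S_r} P_S`, so multiplying
the Sylvester equation for `W` on the left by `P_S⁻¹` gives the equation for `Y = P_S⁻¹ Wᴴ`. The
Gramian `Q̃_T` solves the same equation by the fundamental theorem of calculus applied to
`τ ↦ e^{τ A_rᴴ} C_rᴴ C e^{τ A}`, and the equation has a unique solution because `A_r` and `A` are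
Hurwitz.
-/

open Matrix MeasureTheory NormedSpace

namespace Matrix

section Sylvester

open Polynomial

variable {K : Type*} [Field K] {m n : Type*} [Fintype m] [DecidableEq m] [Fintype n] [DecidableEq n]

theorem aeval_mul_eq_mul_aeval {M : Matrix m m K} {N : Matrix n n K} {X : Matrix m n K}
    (h : M * X = X * N) (q : K[X]) : aeval M q * X = X * aeval N q := by
  have hpow (k : ℕ) : M ^ k * X = X * N ^ k := by
    induction k with
    | zero => simp
    | succ k ih =>
      rw [pow_succ, pow_succ, Matrix.mul_assoc, h, ← Matrix.mul_assoc, ih, Matrix.mul_assoc]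
  induction q using Polynomial.induction_on' with
  | add p q hp hq => rw [map_add, map_add, Matrix.add_mul, Matrix.mul_add, hp, hq]
  | monomial k c =>
    simp only [aeval_monomial, ← Algebra.smul_def, Matrix.smul_mul, hpow, Matrix.mul_smul]

variable [IsAlgClosed K] {M : Matrix m m K} {N : Matrix n n K}

/-- `X` intertwines `M` with `-N`, so `X * χ_M(-N) = χ_M(M) * X = 0`, and `χ_M(-N)` is invertible
by the spectral mapping theorem. -/
theorem eq_zero_of_mul_add_mul_eq_zero (hMN : ∀ μ ∈ spectrum K M, ∀ ν ∈ spectrum K N, μ + ν ≠ 0)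
    {X : Matrix m n K} (hX : M * X + X * N = 0) : X = 0 := by
  cases isEmpty_or_nonempty m
  · exact Subsingleton.elim _ _
  have hunit : IsUnit (aeval (-N) M.charpoly) := by
    have hdeg : 0 < M.charpoly.degree := by
      rw [charpoly_degree_eq_dim]
      exact_mod_cast Fintype.card_pos
    rw [← spectrum.zero_notMem_iff K, spectrum.map_polynomial_aeval_of_degree_pos _ _ hdeg]
    rintro ⟨ν, hν, hroot⟩
    rw [← spectrum.neg_eq, Set.mem_neg] at hν
    exact hMN ν (mem_spectrum_iff_isRoot_charpoly.2 hroot) (-ν) hν (add_neg_cancel ν)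
  have hzero : X * aeval (-N) M.charpoly = 0 := by
    rw [← aeval_mul_eq_mul_aeval (by rw [Matrix.mul_neg, ← add_eq_zero_iff_eq_neg, hX]),
      aeval_self_charpoly, Matrix.zero_mul]
  rw [← Matrix.mul_one X, ← hunit.unit.mul_inv, ← Matrix.mul_assoc, IsUnit.unit_spec, hzero,
    Matrix.zero_mul]

theorem eq_of_mul_add_mul_eq (hMN : ∀ μ ∈ spectrum K M, ∀ ν ∈ spectrum K N, μ + ν ≠ 0)
    {X Y : Matrix m n K} (h : M * X + X * N = M * Y + Y * N) : X = Y := by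
  refine sub_eq_zero.1 (eq_zero_of_mul_add_mul_eq_zero hMN ?_)
  rw [Matrix.mul_sub, Matrix.sub_mul, sub_add_sub_comm, h, sub_self]

theorem isHermitian_of_mul_add_mul_conjTranspose_eq [StarRing K] {S X R : Matrix m m K}
    (hS : ∀ μ ∈ spectrum K S, ∀ ν ∈ spectrum K Sᴴ, μ + ν ≠ 0) (hR : R.IsHermitian)
    (h : S * X + X * Sᴴ = R) : X.IsHermitian := by
  refine eq_of_mul_add_mul_eq hS ?_
  rw [h, ← hR.eq, ← h, conjTranspose_add, conjTranspose_mul, conjTranspose_mul,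
    conjTranspose_conjTranspose, add_comm]

end Sylvester

theorem mem_spectrum_conjTranspose_iff {R : Type*} [CommRing R] [StarRing R] {m : Type*}
    [Fintype m] [DecidableEq m] {M : Matrix m m R} {μ : R} :
    μ ∈ spectrum R Mᴴ ↔ star μ ∈ spectrum R M := by
  rw [← star_eq_conjTranspose, spectrum.map_star, Set.mem_star]

section Gramian

variable {𝕜 : Type*} [RCLike 𝕜] {l m n : Type*} [Fintype m]

theorem mul_of_intervalIntegral (M : Matrix l m 𝕜) {G : ℝ → Matrix m n 𝕜} {a b : ℝ}
    (hG : ∀ i j, IntervalIntegrable (fun τ => G τ i j) volume a b) :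
    M * of (fun i j => ∫ τ in a..b, G τ i j) = of fun i j => ∫ τ in a..b, (M * G τ) i j := by
  ext i j
  simp only [mul_apply, of_apply]
  rw [intervalIntegral.integral_finsetSum fun k _ => (hG k j).const_mul (M i k)]
  simp only [intervalIntegral.integral_const_mul]

theorem of_intervalIntegral_mul (N : Matrix m n 𝕜) {G : ℝ → Matrix l m 𝕜} {a b : ℝ}
    (hG : ∀ i j, IntervalIntegrable (fun τ => G τ i j) volume a b) :
    of (fun i j => ∫ τ in a..b, G τ i j) * N = of fun i j => ∫ τ in a..b, (G τ * N) i j := by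
  ext i j
  simp only [mul_apply, of_apply]
  rw [intervalIntegral.integral_finsetSum fun k _ => (hG i k).mul_const (N k j)]
  simp only [intervalIntegral.integral_mul_const]

variable [Fintype n] [DecidableEq m] [DecidableEq n]

section LinftyOp

/- The operator norm makes square matrices a normed algebra, as the derivative of `exp` requires;
the entrywise statement below does not depend on this choice. -/
attribute [local instance] Matrix.linftyOpNormedAddCommGroup Matrix.linftyOpNormedSpace
  Matrix.linftyOpNormedRing Matrix.linftyOpNormedAlgebra

theorem hasDerivAt_exp_smul_mul_mul_exp_smul_apply (M : Matrix m m 𝕜) (K : Matrix m n 𝕜)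
    (N : Matrix n n 𝕜) (τ : ℝ) (i : m) (j : n) :
    HasDerivAt (fun s : ℝ => (exp (s • M) * K * exp (s • N)) i j)
      ((M * (exp (τ • M) * K * exp (τ • N)) + exp (τ • M) * K * exp (τ • N) * N) i j) τ := by
  let mulCLM : Matrix m n 𝕜 →L[ℝ] Matrix n n 𝕜 →L[ℝ] Matrix m n 𝕜 :=
    (mulLinearMap ℝ).mkContinuous₂ 1 fun X Y => by simpa using linfty_opNorm_mul X Y
  have hleft : HasDerivAt (fun s : ℝ => exp (s • M) * K) (M * exp (τ • M) * K) τ :=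
    (mulRightLinearMap m ℝ K).toContinuousLinearMap.hasFDerivAt.comp_hasDerivAt τ
      (hasDerivAt_exp_smul_const' M τ)
  have hprod := mulCLM.hasDerivAt_of_bilinear (fun _ => hleft)
    (fun _ => hasDerivAt_exp_smul_const N τ)
  refine ((entryLinearMap ℝ 𝕜 i j).toContinuousLinearMap.hasFDerivAt.comp_hasDerivAt τ
    hprod).congr_deriv ?_
  simp only [mulCLM, LinearMap.mkContinuous₂_apply, mulLinearMap_apply_apply, Matrix.mul_assoc]
  rw [add_comm]
  rfl

end LinftyOp

noncomputable def timeLimitedGramian (M : Matrix m m 𝕜) (K : Matrix m n 𝕜) (N : Matrix n n 𝕜)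
    (t : ℝ) : Matrix m n 𝕜 :=
  of fun i j => ∫ τ in (0:ℝ)..t, (exp (τ • M) * K * exp (τ • N)) i j

theorem mul_timeLimitedGramian_add_timeLimitedGramian_mul (M : Matrix m m 𝕜) (K : Matrix m n 𝕜)
    (N : Matrix n n 𝕜) (t : ℝ) :
    M * timeLimitedGramian M K N t + timeLimitedGramian M K N t * N
      = exp (t • M) * K * exp (t • N) - K := by
  have hG := hasDerivAt_exp_smul_mul_mul_exp_smul_apply M K N
  have hG_cont : Continuous fun τ : ℝ => exp (τ • M) * K * exp (τ • N) :=
    continuous_pi fun i => continuous_pi fun j =>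
      continuous_iff_continuousAt.2 fun τ => (hG τ i j).continuousAt
  have hMG := continuous_const (y := M) |>.matrix_mul hG_cont
  have hGN := hG_cont.matrix_mul (continuous_const (y := N))
  have hint i j := (hG_cont.matrix_elem i j).intervalIntegrable (μ := volume) 0 t
  rw [timeLimitedGramian, mul_of_intervalIntegral _ hint, of_intervalIntegral_mul _ hint]
  ext i j
  rw [add_apply, of_apply, of_apply, ← intervalIntegral.integral_add
    ((hMG.matrix_elem i j).intervalIntegrable _ _) ((hGN.matrix_elem i j).intervalIntegrable _ _)]
  refine (intervalIntegral.integral_eq_sub_of_hasDerivAt (fun τ _ => hG τ i j)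
    (((hMG.add hGN).matrix_elem i j).intervalIntegrable _ _)).trans ?_
  simp

end Gramian

end Matrix

section DualRealization

variable {𝕜 : Type*} [RCLike 𝕜] {ι ρ π : Type*} [Fintype ι] [DecidableEq ι] [Fintype ρ]
  [DecidableEq ρ] [Fintype π]

theorem inv_mul_conjTranspose_sylvester_eq_zero {P S : Matrix ρ ρ 𝕜} (hP : P.IsHermitian)
    (hPu : IsUnit P) {A : Matrix ι ι 𝕜} {Bbar : Matrix ρ π 𝕜} {C : Matrix π ι 𝕜}
    {W : Matrix ι ρ 𝕜} {t : ℝ} {A_r : Matrix ρ ρ 𝕜} {C_r : Matrix π ρ 𝕜}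
    (hA_r : A_r = -(P * Sᴴ * P⁻¹)) (hC_r : C_r = -(Bbarᴴ * P⁻¹))
    (hW : Wᴴ * A = S * Wᴴ + Bbar * C - exp (-(t • S)) * Bbar * C * exp (t • A)) :
    A_rᴴ * (P⁻¹ * Wᴴ) + P⁻¹ * Wᴴ * A + C_rᴴ * C - exp (t • A_rᴴ) * C_rᴴ * C * exp (t • A) = 0 := by
  have hPinv : P⁻¹ᴴ = P⁻¹ := by rw [conjTranspose_nonsing_inv, hP.eq]
  have hA_rH : A_rᴴ = P⁻¹ * -S * P := by
    simp only [hA_r, conjTranspose_neg, conjTranspose_mul, conjTranspose_conjTranspose, hPinv,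
      hP.eq, Matrix.mul_neg, Matrix.neg_mul, Matrix.mul_assoc]
  have hC_rH : C_rᴴ = -(P⁻¹ * Bbar) := by
    rw [hC_r, conjTranspose_neg, conjTranspose_mul, conjTranspose_conjTranspose, hPinv]
  have hexp : exp (t • A_rᴴ) = P⁻¹ * exp (-(t • S)) * P := by
    rw [hA_rH, ← exp_conj' P _ hPu]
    simp only [Matrix.mul_neg, Matrix.neg_mul, smul_neg, Matrix.mul_smul, Matrix.smul_mul]
  have hdet : IsUnit P.det := (isUnit_iff_isUnit_det P).1 hPu
  rw [hexp, hA_rH, hC_rH, Matrix.mul_assoc P⁻¹ Wᴴ A, hW]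
  simp only [Matrix.neg_mul, Matrix.mul_neg, Matrix.mul_add, Matrix.mul_sub, Matrix.mul_assoc,
    mul_nonsing_inv_cancel_left _ _ hdet]
  abel

theorem isHermitian_of_timeLimitedLyapunov {S P : Matrix ρ ρ ℂ} {Bbar : Matrix ρ π ℂ} {t : ℝ}
    (hS : ∀ μ ∈ spectrum ℂ S, ∀ ν ∈ spectrum ℂ Sᴴ, μ + ν ≠ 0)
    (hLyap : -(S * P) - P * Sᴴ + Bbar * Bbarᴴ
        - exp (-(t • S)) * Bbar * Bbarᴴ * exp (-(t • Sᴴ)) = 0) :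
    P.IsHermitian := by
  have hBB := isHermitian_mul_conjTranspose_self Bbar
  refine isHermitian_of_mul_add_mul_conjTranspose_eq hS
    (hBB.sub (isHermitian_mul_mul_conjTranspose (exp (-(t • S))) hBB)) ?_
  rw [← exp_conjTranspose, conjTranspose_neg, conjTranspose_smul, star_trivial,
    ← sub_eq_zero, ← neg_eq_zero, ← hLyap]
  simp only [Matrix.mul_assoc]
  abel

end DualRealization

theorem theorem2_v_cross_gramian_general
    (n r p : ℕ) (A : Matrix (Fin n) (Fin n) ℂ) (C : Matrix (Fin p) (Fin n) ℂ)
    (hA : ∀ μ ∈ spectrum ℂ A, μ.re < 0)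
    (t : ℝ)
    (S_r : Matrix (Fin r) (Fin r) ℂ) (Bbar : Matrix (Fin r) (Fin p) ℂ)
    (hS : ∀ μ ∈ spectrum ℂ S_r, 0 < μ.re)
    (P_S : Matrix (Fin r) (Fin r) ℂ) (hPinv : IsUnit P_S)
    (hLyap : -(S_r * P_S) - P_S * S_rᴴ + Bbar * Bbarᴴ
        - exp (-(t • S_r)) * Bbar * Bbarᴴ * exp (-(t • S_rᴴ)) = 0)
    (A_r : Matrix (Fin r) (Fin r) ℂ) (C_r : Matrix (Fin p) (Fin r) ℂ)
    (hA_r : A_r = -(P_S * S_rᴴ * P_S⁻¹)) (hC_r : C_r = -(Bbarᴴ * P_S⁻¹))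
    (hA_rHur : ∀ μ ∈ spectrum ℂ A_r, μ.re < 0)
    (W : Matrix (Fin n) (Fin r) ℂ)
    (hW : Wᴴ * A = S_r * Wᴴ + Bbar * C - exp (-(t • S_r)) * Bbar * C * exp (t • A))
    (Qtilde : Matrix (Fin r) (Fin n) ℂ)
    (hQtilde : Qtilde = Matrix.of fun i j =>
      ∫ τ in (0:ℝ)..t, (exp (τ • A_rᴴ) * C_rᴴ * C * exp (τ • A)) i j) :
    (A_rᴴ * (P_S⁻¹ * Wᴴ) + (P_S⁻¹ * Wᴴ) * A + C_rᴴ * C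
        - exp (t • A_rᴴ) * C_rᴴ * C * exp (t • A) = 0) ∧
      Qtilde = P_S⁻¹ * Wᴴ := by
  have hSS : ∀ μ ∈ spectrum ℂ S_r, ∀ ν ∈ spectrum ℂ S_rᴴ, μ + ν ≠ 0 := fun μ hμ ν hν hsum => by
    have hν' := hS _ (mem_spectrum_conjTranspose_iff.1 hν)
    have hre := congrArg Complex.re hsum
    simp only [Complex.star_def, Complex.conj_re, Complex.add_re, Complex.zero_re] at hν' hre
    linarith [hS μ hμ]
  have hP := isHermitian_of_timeLimitedLyapunov hSS hLyap
  have hY := inv_mul_conjTranspose_sylvester_eq_zero hP hPinv hA_r hC_r hW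
  refine ⟨hY, ?_⟩
  have hAA : ∀ μ ∈ spectrum ℂ A_rᴴ, ∀ ν ∈ spectrum ℂ A, μ + ν ≠ 0 :=
    fun μ hμ ν hν hsum => by
      have hμ' := hA_rHur _ (mem_spectrum_conjTranspose_iff.1 hμ)
      have hre := congrArg Complex.re hsum
      simp only [Complex.star_def, Complex.conj_re, Complex.add_re, Complex.zero_re] at hμ' hre
      linarith [hA ν hν]
  have hQ : Qtilde = timeLimitedGramian A_rᴴ (C_rᴴ * C) A t := by
    simp only [hQtilde, timeLimitedGramian, Matrix.mul_assoc]
  rw [hQ]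
  refine eq_of_mul_add_mul_eq hAA ?_
  rw [mul_timeLimitedGramian_add_timeLimitedGramian_mul, eq_comm, ← sub_eq_zero, ← hY]
  simp only [Matrix.mul_assoc]
  abel

/-- Theorem 2(v) core computation: `Y = P_S⁻¹ Wᴴ` satisfies the
time-limited output cross-Gramian Sylvester equation, and hence by uniqueness the
cross observability Gramian `Q̃_T` equals `P_S⁻¹ Wᴴ`. -/
theorem theorem2_v_cross_gramian
    (n r p : ℕ) (A : Matrix (Fin n) (Fin n) ℂ) (C : Matrix (Fin p) (Fin n) ℂ)
    (hA : ∀ μ ∈ spectrum ℂ A, μ.re < 0)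
    (t : ℝ) (ht : 0 < t)
    (S_r : Matrix (Fin r) (Fin r) ℂ) (Bbar : Matrix (Fin r) (Fin p) ℂ)
    (hS : ∀ μ ∈ spectrum ℂ S_r, 0 < μ.re)
    (P_S : Matrix (Fin r) (Fin r) ℂ) (hPinv : IsUnit P_S)
    (hLyap : -(S_r * P_S) - P_S * S_rᴴ + Bbar * Bbarᴴ
        - exp (-(t • S_r)) * Bbar * Bbarᴴ * exp (-(t • S_rᴴ)) = 0)
    (A_r : Matrix (Fin r) (Fin r) ℂ) (C_r : Matrix (Fin p) (Fin r) ℂ)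
    (hA_r : A_r = -(P_S * S_rᴴ * P_S⁻¹)) (hC_r : C_r = -(Bbarᴴ * P_S⁻¹))
    (hA_rHur : ∀ μ ∈ spectrum ℂ A_r, μ.re < 0)
    (W : Matrix (Fin n) (Fin r) ℂ)
    (hW : Wᴴ * A = S_r * Wᴴ + Bbar * C - exp (-(t • S_r)) * Bbar * C * exp (t • A))
    (Qtilde : Matrix (Fin r) (Fin n) ℂ)
    (hQtilde : Qtilde = Matrix.of fun i j =>
      ∫ τ in (0:ℝ)..t, (exp (τ • A_rᴴ) * C_rᴴ * C * exp (τ • A)) i j) :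
    (A_rᴴ * (P_S⁻¹ * Wᴴ) + (P_S⁻¹ * Wᴴ) * A + C_rᴴ * C
        - exp (t • A_rᴴ) * C_rᴴ * C * exp (t • A) = 0) ∧
      Qtilde = P_S⁻¹ * Wᴴ :=
  theorem2_v_cross_gramian_general n r p A C hA t S_r Bbar hS P_S hPinv hLyap A_r C_r hA_r hC_r
    hA_rHur W hW Qtilde hQtilde
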